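/- arXiv:2308.09950 — 3 statements merged into one kernel-verified Lean document; each statement's English description precedes it below -/
import Mathlib

section
/- Every connected graph G of order n ≥ 3 with minimum degree δ contains a path on at least min(2δ + 1, n) vertices. -/
open SimpleGraph Finset

/-- `H` has a copy inside `G` (subgraph isomorphic to `H`). -/
def HasCopy {α : Type*} {β : Type*} (H : SimpleGraph α) (G : SimpleGraph β) : Prop :=
  ∃ f : α → β, Function.Injective f ∧ ∀ a b, H.Adj a b → G.Adj (f a) (f b)

/-- The star `K_{1,n}` with center `0` and `n` leaves. -/
def starGraph (n : ℕ) : SimpleGraph (Fin (n + 1)) where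
  Adj a b := a ≠ b ∧ (a = 0 ∨ b = 0)
  symm := ⟨fun a b h => ⟨h.1.symm, h.2.symm⟩⟩
  loopless := ⟨fun a h => h.1 rfl⟩

/-- The graphs `Gs` form an edge-decomposition of the complete graph:
every pair of distinct vertices is adjacent in exactly one of them. -/
def IsDecompOfTop {V : Type*} {c : ℕ} (Gs : Fin c → SimpleGraph V) : Prop :=
  ∀ a b : V, a ≠ b → ∃! i, (Gs i).Adj a b

/-- `N` is Ramsey for the stars `K_{1,n i}` and the path `P_m`. -/
def starPathRamseyProp (c : ℕ) (n : Fin c → ℕ) (m : ℕ) (N : ℕ) : Prop :=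
  ∀ Gs : Fin (c + 1) → SimpleGraph (Fin N), IsDecompOfTop Gs →
    (∃ i : Fin c, HasCopy (_root_.starGraph (n i)) (Gs i.castSucc)) ∨
      HasCopy (SimpleGraph.pathGraph m) (Gs (Fin.last c))

/-- `N` is Ramsey for the stars `K_{1,n i}`. -/
def starRamseyProp (c : ℕ) (n : Fin c → ℕ) (N : ℕ) : Prop :=
  ∀ Gs : Fin c → SimpleGraph (Fin N), IsDecompOfTop Gs →
    ∃ i, HasCopy (_root_.starGraph (n i)) (Gs i)

/-- A proper edge coloring of `G` with `k` colors exists. -/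
def HasProperEdgeColoring {V : Type*} (G : SimpleGraph V) (k : ℕ) : Prop :=
  ∃ f : Sym2 V → Fin k, ∀ e₁ ∈ G.edgeSet, ∀ e₂ ∈ G.edgeSet,
    e₁ ≠ e₂ → (∃ v, v ∈ e₁ ∧ v ∈ e₂) → f e₁ ≠ f e₂

/-- The chromatic index (edge chromatic number) of `G`. -/
noncomputable def chromIndex {V : Type*} (G : SimpleGraph V) : ℕ :=
  sInf {k | HasProperEdgeColoring G k}

/-- The complete `n`-partite graph with all parts of size `r`. -/
def completeMultipartiteEq (n r : ℕ) : SimpleGraph (Fin n × Fin r) where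
  Adj a b := a.1 ≠ b.1
  symm := ⟨fun a b h => h.symm⟩
  loopless := ⟨fun a h => h rfl⟩

/-- A Hamilton cycle (as a spanning connected 2-regular subgraph). -/
def IsHamCycle {V : Type*} (C : SimpleGraph V) : Prop :=
  C.Connected ∧ ∀ v, (C.neighborSet v).ncard = 2

/-- A perfect matching (as a spanning 1-regular subgraph). -/
def IsPerfMatching {V : Type*} (M : SimpleGraph V) : Prop :=
  ∀ v, (M.neighborSet v).ncard = 1

/-- The graphs `Gs` partition the edge set of `G`. -/
def EdgePartition {V : Type*} {ι : Type*} (G : SimpleGraph V) (Gs : ι → SimpleGraph V) : Prop :=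
  (∀ i, Gs i ≤ G) ∧ ∀ a b : V, G.Adj a b → ∃! i, (Gs i).Adj a b



section Aux
variable {V : Type*} {G : SimpleGraph V}

/-- cyclic chain: consecutive adjacency plus wraparound edge -/
def CycC (G : SimpleGraph V) (c : List V) : Prop :=
  c.Chain' G.Adj ∧ ∀ x ∈ c.getLast?, ∀ y ∈ c.head?, G.Adj x y

lemma cycC_rotate {x y : List V} (h : CycC G (x ++ y)) : CycC G (y ++ x) := by
  rcases List.isChain_append.1 h.1 with ⟨hx, hy, hxy⟩
  have hw := h.2
  rcases eq_or_ne x [] with rfl | hxn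
  · simpa using h
  rcases eq_or_ne y [] with rfl | hyn
  · simpa using h
  refine ⟨hy.append hx ?_, ?_⟩
  · intro a ha b hb
    exact hw a (by rwa [List.getLast?_append_of_ne_nil _ hyn])
      b (by rwa [List.head?_append_of_ne_nil _ hxn])
  · intro a ha b hb
    rw [List.getLast?_append_of_ne_nil _ hxn] at ha
    rw [List.head?_append_of_ne_nil _ hyn] at hb
    exact hxy a ha b hb

lemma cross_edge {l : List V} {a b : V} (p : G.Walk a b) (ha : a ∈ l) (hb : b ∉ l) :
    ∃ x u, x ∈ l ∧ u ∉ l ∧ G.Adj x u := by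
  induction p with
  | nil => exact absurd ha hb
  | @cons a v w h q ih =>
    by_cases hm : v ∈ l
    · exact ih hm hb
    · exact ⟨a, v, ha, hm, h⟩

end Aux


theorem stmt0 {V : Type*} [Fintype V] (G : SimpleGraph V) [DecidableRel G.Adj]
    (hconn : G.Connected) (hn : 3 ≤ Fintype.card V) :
    ∃ k, min (2 * G.minDegree + 1) (Fintype.card V) ≤ k ∧
      HasCopy (SimpleGraph.pathGraph k) G := by
  classical
  obtain ⟨v⟩ : Nonempty V := Fintype.card_pos_iff.mp (by omega)
  set n := Fintype.card V with hn'
  set δ := G.minDegree with hδ'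
  set S : Set ℕ := {m | ∃ l : List V, l.Chain' G.Adj ∧ l.Nodup ∧ l.length = m} with hS
  have hS1 : 1 ∈ S := ⟨[v], List.isChain_singleton v, List.nodup_singleton v, rfl⟩
  have hSb : BddAbove S := ⟨n, fun m hm => by
    obtain ⟨l, _, hnd, hlen⟩ := hm; exact hlen ▸ hnd.length_le_card⟩
  obtain ⟨l, hch, hnd, hlenk⟩ := Nat.sSup_mem ⟨1, hS1⟩ hSb
  set k := sSup S with hk
  have hmax : ∀ l' : List V, l'.Chain' G.Adj → l'.Nodup → l'.length ≤ k :=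
    fun l' h1 h2 => le_csSup hSb ⟨l', h1, h2, rfl⟩
  have hk1 : 1 ≤ k := le_csSup hSb hS1
  set f : Fin k → V := fun i => l.get (Fin.cast hlenk.symm i) with hf
  have hfinj : Function.Injective f :=
    (List.nodup_iff_injective_get.mp hnd).comp (Fin.cast_injective _)
  have hchain : ∀ (i : ℕ) (h1 : i < k) (h2 : i + 1 < k),
      G.Adj (f ⟨i, h1⟩) (f ⟨i+1, h2⟩) := by
    intro i h1 h2
    exact List.isChain_iff_getElem.mp hch i (by omega)
  refine ⟨k, ?_, ?_⟩
  swap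
  · refine ⟨f, hfinj, ?_⟩
    intro a b hab
    rw [SimpleGraph.pathGraph_adj] at hab
    rcases hab with h | h
    · have h2 : (⟨a.1 + 1, h ▸ b.2⟩ : Fin k) = b := Fin.ext h
      exact h2 ▸ hchain a.1 a.2 (h ▸ b.2)
    · have h2 : (⟨b.1 + 1, h ▸ a.2⟩ : Fin k) = a := Fin.ext h
      exact (h2 ▸ hchain b.1 b.2 (h ▸ a.2)).symm
  by_contra hcon
  push_neg at hcon
  have hk2δ : k < 2 * δ + 1 := lt_of_lt_of_le hcon (min_le_left _ _)
  have hkn : k < n := lt_of_lt_of_le hcon (min_le_right _ _)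
  have hlk : k - 1 < k := by omega
  have hgE : ∀ (i : ℕ) (hi : i < k), l[i]? = some (f ⟨i, hi⟩) := by
    intro i hi
    rw [List.getElem?_eq_getElem (by omega)]
    rfl
  have hheadq : l.head? = some (f ⟨0, hk1⟩) := by
    rw [List.head?_eq_getElem?, hgE 0 hk1]
  have hstepA : ∀ (l₀ : List V) (x y : V), l₀.Chain' G.Adj → l₀.Nodup →
      l₀.length = k → l₀.head? = some y → G.Adj x y → x ∈ l₀ := by
    intro l₀ x y h1 h2 h3 hhead hadj
    by_contra hxl
    have hc : (x :: l₀).Chain' G.Adj := List.isChain_cons.mpr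
      ⟨fun z hz => by
        rw [hhead] at hz
        simp only [Option.mem_some_iff] at hz
        subst hz; exact hadj, h1⟩
    have := hmax (x :: l₀) hc (List.nodup_cons.mpr ⟨hxl, h2⟩)
    simp only [List.length_cons, h3] at this
    omega
  have hmemA : ∀ x, G.Adj x (f ⟨0, hk1⟩) → x ∈ l :=
    fun x hx => hstepA l x _ hch hnd hlenk hheadq hx
  have hflip : flip G.Adj = G.Adj := by
    funext a b; exact propext ⟨fun h => h.symm, fun h => h.symm⟩
  have hchr : l.reverse.Chain' G.Adj := by
    exact List.isChain_reverse.mpr (List.IsChain.imp (fun a b h => h.symm) hch)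
  have hrev_head : l.reverse.head? = some (f ⟨k-1, hlk⟩) := by
    rw [List.head?_reverse, List.getLast?_eq_getElem?, hlenk, hgE (k-1) hlk]
  have hmemB : ∀ x, G.Adj x (f ⟨k-1, hlk⟩) → x ∈ l := by
    intro x hx
    have := hstepA l.reverse x _ hchr (List.nodup_reverse.mpr hnd)
      (by rw [List.length_reverse, hlenk]) hrev_head hx
    exact List.mem_reverse.mp this
  have hcardN : ∀ w : V, (∀ x, G.Adj x w → x ∈ l) →
      δ ≤ ((Finset.univ : Finset (Fin k)).filter (fun i => G.Adj w (f i))).card := by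
    intro w hw
    have hsub : G.neighborFinset w ⊆
        ((Finset.univ : Finset (Fin k)).filter (fun i => G.Adj w (f i))).image f := by
      intro x hx
      rw [SimpleGraph.mem_neighborFinset] at hx
      obtain ⟨i, hi⟩ := List.mem_iff_get.mp (hw x hx.symm)
      have hfi : f (Fin.cast hlenk i) = x := hi
      exact Finset.mem_image.mpr ⟨Fin.cast hlenk i,
        Finset.mem_filter.mpr ⟨Finset.mem_univ _, hfi ▸ hx⟩, hfi⟩
    calc δ ≤ G.degree w := G.minDegree_le_degree w
      _ ≤ _ := Finset.card_le_card hsub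
      _ ≤ _ := Finset.card_image_le
  set A : Finset ℕ := ((Finset.univ : Finset (Fin k)).filter
      (fun i => G.Adj (f ⟨0, hk1⟩) (f i))).image Fin.val with hA
  set B : Finset ℕ := ((Finset.univ : Finset (Fin k)).filter
      (fun i => G.Adj (f ⟨k-1, hlk⟩) (f i))).image (fun i : Fin k => i.1 + 1) with hB
  have hAcard : δ ≤ A.card := by
    rw [hA, Finset.card_image_of_injective _ Fin.val_injective]
    exact hcardN _ hmemA
  have hBcard : δ ≤ B.card := by
    rw [hB, Finset.card_image_of_injective _
      (fun a b h => Fin.ext (Nat.succ_injective h))]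
    exact hcardN _ hmemB
  have hAsub : A ⊆ Finset.Icc 1 (k-1) := by
    intro m hm
    obtain ⟨j, hj, rfl⟩ := Finset.mem_image.mp hm
    rw [Finset.mem_filter] at hj
    have hne : j.1 ≠ 0 := by
      intro h0
      have hj0 : j = ⟨0, hk1⟩ := Fin.ext h0
      exact G.loopless.irrefl _ (hj0 ▸ hj.2)
    have := j.2
    exact Finset.mem_Icc.mpr ⟨by omega, by omega⟩
  have hBsub : B ⊆ Finset.Icc 1 (k-1) := by
    intro m hm
    obtain ⟨j, hj, rfl⟩ := Finset.mem_image.mp hm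
    rw [Finset.mem_filter] at hj
    have hne : j.1 ≠ k - 1 := by
      intro h0
      have hj0 : j = ⟨k-1, hlk⟩ := Fin.ext h0
      exact G.loopless.irrefl _ (hj0 ▸ hj.2)
    have := j.2
    exact Finset.mem_Icc.mpr ⟨by omega, by omega⟩
  have hABne : (A ∩ B).Nonempty := by
    rw [Finset.nonempty_iff_ne_empty]
    intro hemp
    have hdisj : Disjoint A B := Finset.disjoint_iff_inter_eq_empty.mpr hemp
    have h1 : (A ∪ B).card = A.card + B.card := Finset.card_union_of_disjoint hdisj
    have h2 : (A ∪ B).card ≤ k - 1 := le_trans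
      (Finset.card_le_card (Finset.union_subset hAsub hBsub)) (by rw [Nat.card_Icc]; omega)
    omega
  obtain ⟨m, hm⟩ := hABne
  rw [Finset.mem_inter] at hm
  have hmIcc : m ∈ Finset.Icc 1 (k-1) := hAsub hm.1
  rw [Finset.mem_Icc] at hmIcc
  have hmlt : m < k := by omega
  obtain ⟨jA, hjA, hjAval⟩ := Finset.mem_image.mp hm.1
  rw [Finset.mem_filter] at hjA
  have hadjA : G.Adj (f ⟨0, hk1⟩) (f ⟨m, hmlt⟩) := by
    have hj0 : jA = ⟨m, hmlt⟩ := Fin.ext hjAval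
    exact hj0 ▸ hjA.2
  obtain ⟨jB, hjB, hjBval⟩ := Finset.mem_image.mp hm.2
  rw [Finset.mem_filter] at hjB
  have hadjB : G.Adj (f ⟨k-1, hlk⟩) (f ⟨m-1, by omega⟩) := by
    have hj0 : jB = ⟨m-1, by omega⟩ := Fin.ext (show (jB : ℕ) = m - 1 by omega)
    exact hj0 ▸ hjB.2
  set c : List V := l.take m ++ (l.drop m).reverse with hcdef
  have hperm : List.Perm c l := (List.Perm.append_left (l.take m)
    (List.reverse_perm (l.drop m))).trans (by rw [List.take_append_drop])
  have hndc : c.Nodup := hperm.symm.nodup hnd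
  have hlc : c.length = k := hperm.length_eq.trans hlenk
  have htne : l.take m ≠ [] := by
    intro h
    have := congrArg List.length h
    simp only [List.length_take, hlenk, List.length_nil] at this
    omega
  have hdne : l.drop m ≠ [] := by
    intro h
    have := congrArg List.length h
    simp only [List.length_drop, hlenk, List.length_nil] at this
    omega
  have hrne : (l.drop m).reverse ≠ [] := by simpa using hdne
  have hc_head : c.head? = some (f ⟨0, hk1⟩) := by
    rw [hcdef, List.head?_append_of_ne_nil _ htne, List.head?_eq_getElem?,
      List.getElem?_take, if_pos (by omega), hgE 0 hk1]
  have hc_last : c.getLast? = some (f ⟨m, hmlt⟩) := by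
    rw [hcdef, List.getLast?_append_of_ne_nil _ hrne, List.getLast?_reverse,
      List.head?_eq_getElem?, List.getElem?_drop, Nat.add_zero, hgE m hmlt]
  have htake_last : (l.take m).getLast? = some (f ⟨m-1, by omega⟩) := by
    rw [List.getLast?_eq_getElem?, List.length_take, hlenk, min_eq_left (by omega),
      List.getElem?_take, if_pos (by omega), hgE (m-1) (by omega)]
  have hdrop_revhead : ((l.drop m).reverse).head? = some (f ⟨k-1, hlk⟩) := by
    rw [List.head?_reverse, List.getLast?_drop, if_neg (by omega),
      List.getLast?_eq_getElem?, hlenk, hgE (k-1) hlk]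
  have hchc : c.Chain' G.Adj := by
    refine List.IsChain.append (hch.take m) ?_ ?_
    · rw [List.isChain_reverse]; exact (hch.drop m).imp (fun a b h => h.symm)
    · intro x hx y hy
      rw [htake_last] at hx
      rw [hdrop_revhead] at hy
      simp only [Option.mem_some_iff] at hx hy
      subst hx; subst hy
      exact hadjB.symm
  have hcyc : CycC G c := by
    refine ⟨hchc, ?_⟩
    intro x hx y hy
    rw [hc_last] at hx
    rw [hc_head] at hy
    simp only [Option.mem_some_iff] at hx hy
    subst hx; subst hy
    exact hadjA.symm
  have hout : ∃ w, w ∉ l := by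
    by_contra hall
    push_neg at hall
    have hsub : (Finset.univ : Finset V) ⊆ l.toFinset :=
      fun x _ => List.mem_toFinset.mpr (hall x)
    have hcard := Finset.card_le_card hsub
    rw [List.toFinset_card_of_nodup hnd, hlenk, Finset.card_univ] at hcard
    omega
  obtain ⟨w, hw⟩ := hout
  have hv0l : f ⟨0, hk1⟩ ∈ l := List.get_mem l ⟨0, by omega⟩
  obtain ⟨p⟩ := hconn.preconnected (f ⟨0, hk1⟩) w
  obtain ⟨x, u, hxl, hul, hxu⟩ := cross_edge p hv0l hw
  have hxc : x ∈ c := hperm.mem_iff.mpr hxl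
  obtain ⟨j, hj⟩ := List.mem_iff_get.mp hxc
  set c₂ : List V := c.drop j.1 ++ c.take j.1 with hc2
  have hcyc2 : CycC G c₂ := cycC_rotate (by rw [List.take_append_drop]; exact hcyc)
  have hperm2 : List.Perm c₂ c := List.perm_append_comm.trans (by rw [List.take_append_drop])
  have hdropne : c.drop j.1 ≠ [] := by
    intro h
    have := congrArg List.length h
    simp only [List.length_drop, List.length_nil] at this
    have := j.2
    omega
  have hc2head : c₂.head? = some x := by
    rw [hc2, List.head?_append_of_ne_nil _ hdropne, List.head?_eq_getElem?,
      List.getElem?_drop, Nat.add_zero, List.getElem?_eq_getElem j.2]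
    exact congrArg some hj
  have hchain2 : (u :: c₂).Chain' G.Adj := List.isChain_cons.mpr
    ⟨by
      intro y hy
      rw [hc2head] at hy
      simp only [Option.mem_some_iff] at hy
      subst hy
      exact hxu.symm, hcyc2.1⟩
  have hnd2 : (u :: c₂).Nodup := List.nodup_cons.mpr
    ⟨fun hu => hul ((hperm2.trans hperm).mem_iff.mp hu), hperm2.symm.nodup hndc⟩
  have hle := hmax _ hchain2 hnd2
  have hl2 : c₂.length = k := hperm2.length_eq.trans hlc
  simp only [List.length_cons, hl2] at hle
  omega
end

section
/- Let n₁, …, n_c, m be positive integers and Σ = Σ_{i=1}^{c}(n_i − 1). If m ≥ Σ + 1, then R(K_{1,n₁}, …, K_{1,n_c}, P_m) = max(m, 2Σ + 1). -/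
open SimpleGraph Finset

def GoodPath {N : ℕ} (G : SimpleGraph (Fin N)) (l : ℕ) : Prop :=
  ∃ f : ℕ → Fin N, (∀ j k, j ≤ l → k ≤ l → f j = f k → j = k) ∧
    ∀ i, i < l → G.Adj (f i) (f (i + 1))

lemma GoodPath.lt {N : ℕ} {G : SimpleGraph (Fin N)} {l : ℕ} (h : GoodPath G l) : l < N := by
  obtain ⟨f, hinj, -⟩ := h
  have : Function.Injective (fun j : Fin (l + 1) => f j.val) := by
    intro a b hab
    exact Fin.ext (hinj a b (Nat.lt_succ_iff.mp a.isLt) (Nat.lt_succ_iff.mp b.isLt) hab)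
  have := Fintype.card_le_of_injective _ this
  simpa using this

theorem exists_long_path {N δ : ℕ} (G : SimpleGraph (Fin N)) [DecidableRel G.Adj]
    (hN : 0 < N) (hδ : ∀ v, δ ≤ G.degree v) (h2 : N ≤ 2 * δ + 1) :
    GoodPath G (N - 1) := by
  classical
  have good0 : GoodPath G 0 :=
    ⟨fun _ => ⟨0, hN⟩, fun j k hj hk _ => by omega, fun i hi => by omega⟩
  set L := Nat.findGreatest (GoodPath G) (N - 1) with hLdef
  have hL : GoodPath G L := Nat.findGreatest_spec (Nat.zero_le _) good0
  have hmax : ∀ k, GoodPath G k → k ≤ L := fun k hk =>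
    Nat.le_findGreatest (by have := hk.lt; omega) hk
  by_cases hfin : L = N - 1
  · rwa [hfin] at hL
  -- otherwise derive a contradiction by extending
  exfalso
  have hLN : L + 2 ≤ N := by have := Nat.findGreatest_le (P := GoodPath G) (N - 1); omega
  obtain ⟨f, finj, fadj⟩ := hL
  -- common neighbor property
  have hcn : ∀ u v : Fin N, u ≠ v → ¬G.Adj u v → ∃ t, G.Adj u t ∧ G.Adj v t := by
    intro u v huv hadj
    by_contra hno
    push_neg at hno
    have hdisj : Disjoint (G.neighborFinset u) (G.neighborFinset v) := by
      rw [Finset.disjoint_left]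
      intro t htu htv
      exact hno t (by simpa using htu) (by simpa using htv)
    have hsub : G.neighborFinset u ∪ G.neighborFinset v ⊆ univ \ {u, v} := by
      intro t ht
      simp only [Finset.mem_union, mem_neighborFinset] at ht
      simp only [Finset.mem_sdiff, Finset.mem_univ, true_and, Finset.mem_insert,
        Finset.mem_singleton]
      push_neg
      constructor
      · rintro rfl
        rcases ht with ht | ht
        · exact G.loopless.irrefl _ ht
        · exact hadj ht.symm
      · rintro rfl
        rcases ht with ht | ht
        · exact hadj ht
        · exact G.loopless.irrefl _ ht
    have h1 := Finset.card_le_card hsub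
    rw [Finset.card_union_of_disjoint hdisj] at h1
    have h2' : (univ \ {u, v} : Finset (Fin N)).card = N - 2 := by
      rw [Finset.card_sdiff_of_subset (Finset.subset_univ _)]
      simp [Finset.card_insert_of_notMem, huv]
    have hu := hδ u; have hv := hδ v
    rw [SimpleGraph.degree] at hu hv
    omega
  -- no extension in front
  have hfront : ∀ v, G.Adj v (f 0) → ∃ j, j ≤ L ∧ f j = v := by
    intro v hv
    by_contra hno
    push_neg at hno
    have : GoodPath G (L + 1) := by
      refine ⟨fun i => if i = 0 then v else f (i - 1), ?_, ?_⟩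
      · intro j k hj hk hjk
        dsimp only at hjk
        by_cases hj0 : j = 0 <;> by_cases hk0 : k = 0
        · omega
        · rw [if_pos hj0, if_neg hk0] at hjk
          exact absurd hjk.symm (hno (k - 1) (by omega))
        · rw [if_neg hj0, if_pos hk0] at hjk
          exact absurd hjk (hno (j - 1) (by omega))
        · rw [if_neg hj0, if_neg hk0] at hjk
          have := finj (j - 1) (k - 1) (by omega) (by omega) hjk
          omega
      · intro i hi
        dsimp only
        by_cases hi0 : i = 0
        · subst hi0; simpa using hv
        · rw [if_neg hi0, if_neg (by omega : ¬ i + 1 = 0)]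
          have := fadj (i - 1) (by omega)
          rw [show i - 1 + 1 = i by omega] at this
          rw [show i + 1 - 1 = i by omega]
          exact this
    have := hmax _ this; omega
  -- no extension in back
  have hback : ∀ v, G.Adj (f L) v → ∃ j, j ≤ L ∧ f j = v := by
    intro v hv
    by_contra hno
    push_neg at hno
    have : GoodPath G (L + 1) := by
      refine ⟨fun i => if i ≤ L then f i else v, ?_, ?_⟩
      · intro j k hj hk hjk
        dsimp only at hjk
        by_cases hjL : j ≤ L <;> by_cases hkL : k ≤ L
        · rw [if_pos hjL, if_pos hkL] at hjk
          exact finj _ _ hjL hkL hjk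
        · rw [if_pos hjL, if_neg hkL] at hjk
          exact absurd hjk (hno j hjL)
        · rw [if_neg hjL, if_pos hkL] at hjk
          exact absurd hjk.symm (hno k hkL)
        · omega
      · intro i hi
        dsimp only
        by_cases hiL : i < L
        · rw [if_pos (by omega : i ≤ L), if_pos (by omega : i + 1 ≤ L)]
          exact fadj i hiL
        · have hieq : i = L := by omega
          subst hieq
          rw [if_pos le_rfl, if_neg (by omega : ¬ L + 1 ≤ L)]
          exact hv
    have := hmax _ this; omega
  -- the rotation sets
  set A := (Finset.range L).filter (fun j => G.Adj (f 0) (f (j + 1))) with hAdef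
  set B := (Finset.range L).filter (fun j => G.Adj (f L) (f j)) with hBdef
  have hAcard : δ ≤ A.card := by
    have key : ∀ v : Fin N, ∃ j, v ∈ G.neighborFinset (f 0) → (j < L ∧ f (j + 1) = v) := by
      intro v
      by_cases hv : v ∈ G.neighborFinset (f 0)
      · rw [mem_neighborFinset] at hv
        obtain ⟨j, hj, hfj⟩ := hfront v hv.symm
        have hj0 : j ≠ 0 := by
          rintro rfl
          exact G.loopless.irrefl _ (hfj ▸ hv)
        exact ⟨j - 1, fun _ => ⟨by omega, by rw [show j - 1 + 1 = j by omega]; exact hfj⟩⟩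
      · exact ⟨0, fun h => absurd h hv⟩
    choose φ hφ using key
    have : (G.neighborFinset (f 0)).card ≤ A.card := by
      refine Finset.card_le_card_of_injOn φ ?_ ?_
      · intro v hv
        obtain ⟨h1, h2⟩ := hφ v hv
        rw [hAdef, Finset.mem_coe, Finset.mem_filter, Finset.mem_range]
        refine ⟨h1, ?_⟩
        rw [h2]
        rwa [← mem_neighborFinset]
      · intro v hv w hw hvw
        obtain ⟨h1, h2⟩ := hφ v hv
        obtain ⟨h3, h4⟩ := hφ w hw
        rw [← h2, ← h4, hvw]
    have := hδ (f 0); rw [SimpleGraph.degree] at this; omega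
  have hBcard : δ ≤ B.card := by
    have key : ∀ v : Fin N, ∃ j, v ∈ G.neighborFinset (f L) → (j < L ∧ f j = v) := by
      intro v
      by_cases hv : v ∈ G.neighborFinset (f L)
      · rw [mem_neighborFinset] at hv
        obtain ⟨j, hj, hfj⟩ := hback v hv
        have hjL : j ≠ L := by
          rintro rfl
          exact G.loopless.irrefl _ (hfj ▸ hv)
        exact ⟨j, fun _ => ⟨by omega, hfj⟩⟩
      · exact ⟨0, fun h => absurd h hv⟩
    choose φ hφ using key
    have : (G.neighborFinset (f L)).card ≤ B.card := by
      refine Finset.card_le_card_of_injOn φ ?_ ?_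
      · intro v hv
        obtain ⟨h1, h2⟩ := hφ v hv
        rw [hBdef, Finset.mem_coe, Finset.mem_filter, Finset.mem_range]
        refine ⟨h1, ?_⟩
        rw [h2]
        rwa [← mem_neighborFinset]
      · intro v hv w hw hvw
        obtain ⟨h1, h2⟩ := hφ v hv
        obtain ⟨h3, h4⟩ := hφ w hw
        rw [← h2, ← h4, hvw]
    have := hδ (f L); rw [SimpleGraph.degree] at this; omega
  -- intersection nonempty
  have hABsub : A ∪ B ⊆ Finset.range L := by
    rw [hAdef, hBdef]
    exact Finset.union_subset (Finset.filter_subset _ _) (Finset.filter_subset _ _)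
  have hABi : (A ∩ B).Nonempty := by
    rw [← Finset.card_pos]
    have h3 := Finset.card_union_add_card_inter A B
    have h4 := Finset.card_le_card hABsub
    rw [Finset.card_range] at h4
    omega
  obtain ⟨i, hi⟩ := hABi
  rw [Finset.mem_inter, hAdef, hBdef, Finset.mem_filter, Finset.mem_filter,
    Finset.mem_range] at hi
  obtain ⟨⟨hiL, e1⟩, -, e2⟩ := hi
  -- the rotated cycle
  set ι : ℕ → ℕ := fun j => if j ≤ L - i - 1 then i + 1 + j else L - j with hιdef
  have hιle : ∀ j, j ≤ L → ι j ≤ L := by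
    intro j hj; rw [hιdef]; dsimp only; split_ifs <;> omega
  have hιinj : ∀ j k, j ≤ L → k ≤ L → ι j = ι k → j = k := by
    intro j k hj hk hjk; rw [hιdef] at hjk; dsimp only at hjk
    split_ifs at hjk <;> omega
  have hιsurj : ∀ t, t ≤ L → ∃ s, s ≤ L ∧ ι s = t := by
    intro t ht
    by_cases hti : i + 1 ≤ t
    · refine ⟨t - (i + 1), by omega, ?_⟩
      rw [hιdef]; dsimp only; split_ifs <;> omega
    · refine ⟨L - t, by omega, ?_⟩
      rw [hιdef]; dsimp only; split_ifs <;> omega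
  set g : ℕ → Fin N := fun j => f (ι j) with hgdef
  have ginj : ∀ j k, j ≤ L → k ≤ L → g j = g k → j = k := by
    intro j k hj hk hjk
    exact hιinj j k hj hk (finj _ _ (hιle j hj) (hιle k hk) hjk)
  have gadj : ∀ j, j < L → G.Adj (g j) (g (j + 1)) := by
    intro j hj
    have hcase : (ι (j + 1) = ι j + 1 ∧ ι j < L) ∨ (ι j = ι (j + 1) + 1 ∧ ι (j + 1) < L)
        ∨ (ι j = L ∧ ι (j + 1) = i) := by
      rw [hιdef]; dsimp only; split_ifs <;> omega
    rcases hcase with ⟨hc1, hc2⟩ | ⟨hc1, hc2⟩ | ⟨hc1, hc2⟩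
    · rw [hgdef]; dsimp only; rw [hc1]; exact fadj _ hc2
    · rw [hgdef]; dsimp only; rw [hc1]; exact (fadj _ hc2).symm
    · rw [hgdef]; dsimp only; rw [hc1, hc2]; exact e2
  have gL0 : G.Adj (g L) (g 0) := by
    have h1 : ι L = 0 := by rw [hιdef]; dsimp only; split_ifs <;> omega
    have h0 : ι 0 = i + 1 := by rw [hιdef]; dsimp only; split_ifs <;> omega
    rw [hgdef]; dsimp only; rw [h1, h0]; exact e1
  have gcyc : ∀ a, a ≤ L → G.Adj (g a) (g ((a + 1) % (L + 1))) := by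
    intro a ha
    by_cases haL : a = L
    · subst haL
      rw [Nat.mod_self]
      exact gL0
    · rw [Nat.mod_eq_of_lt (by omega)]
      exact gadj a (by omega)
  -- a vertex outside the path
  have hout : ∃ w : Fin N, ∀ j, j ≤ L → f j ≠ w := by
    by_contra hno
    push_neg at hno
    have hsurj : Function.Surjective (fun j : Fin (L + 1) => f j.val) := by
      intro w
      obtain ⟨j, hj, hfj⟩ := hno w
      exact ⟨⟨j, by omega⟩, hfj⟩
    have := Fintype.card_le_of_surjective _ hsurj
    simp only [Fintype.card_fin] at this
    omega
  obtain ⟨w₀, hw₀⟩ := hout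
  -- an edge from outside to the path
  have hedge : ∃ w, (∀ j, j ≤ L → f j ≠ w) ∧ ∃ t, t ≤ L ∧ G.Adj w (f t) := by
    by_cases haw : G.Adj w₀ (f 0)
    · exact ⟨w₀, hw₀, 0, Nat.zero_le _, haw⟩
    · have hne : w₀ ≠ f 0 := fun he => hw₀ 0 (Nat.zero_le _) he.symm
      obtain ⟨t, hwt, h0t⟩ := hcn w₀ (f 0) hne haw
      by_cases ht : ∃ j, j ≤ L ∧ f j = t
      · obtain ⟨j, hj, hfj⟩ := ht
        exact ⟨w₀, hw₀, j, hj, by rw [hfj]; exact hwt⟩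
      · push_neg at ht
        exact ⟨t, fun j hj => ht j hj, 0, Nat.zero_le _, h0t.symm⟩
  obtain ⟨w, hwnot, t, htL, hwt⟩ := hedge
  obtain ⟨s, hsL, hst⟩ := hιsurj t htL
  have hws : G.Adj w (g s) := by rw [hgdef]; dsimp only; rw [hst]; exact hwt
  have hgnot : ∀ j, j ≤ L → g j ≠ w := by
    intro j hj
    rw [hgdef]; dsimp only
    exact hwnot _ (hιle j hj)
  have hmod : ∀ x : ℕ, (s + x) % (L + 1) ≤ L := by
    intro x
    have := Nat.mod_lt (s + x) (show 0 < L + 1 by omega)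
    omega
  have : GoodPath G (L + 1) := by
    refine ⟨fun j => if j = 0 then w else g ((s + (j - 1)) % (L + 1)), ?_, ?_⟩
    · intro j k hj hk hjk
      dsimp only at hjk
      by_cases hj0 : j = 0 <;> by_cases hk0 : k = 0
      · omega
      · rw [if_pos hj0, if_neg hk0] at hjk
        exact absurd hjk.symm (hgnot _ (hmod _))
      · rw [if_neg hj0, if_pos hk0] at hjk
        exact absurd hjk (hgnot _ (hmod _))
      · rw [if_neg hj0, if_neg hk0] at hjk
        have heq := ginj _ _ (hmod _) (hmod _) hjk
        have h1 : (j - 1) % (L + 1) = (k - 1) % (L + 1) :=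
          Nat.ModEq.add_left_cancel' s heq
        rw [Nat.mod_eq_of_lt (by omega), Nat.mod_eq_of_lt (by omega)] at h1
        omega
    · intro j hj
      dsimp only
      by_cases hj0 : j = 0
      · subst hj0
        rw [if_pos rfl, if_neg (by omega : ¬ (0 : ℕ) + 1 = 0)]
        rw [show 0 + 1 - 1 = 0 by omega, Nat.add_zero, Nat.mod_eq_of_lt (by omega)]
        exact hws
      · rw [if_neg hj0, if_neg (by omega : ¬ j + 1 = 0)]
        have hstep : ((s + (j - 1)) % (L + 1) + 1) % (L + 1) = (s + (j + 1 - 1)) % (L + 1) := by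
          have hme : ((s + (j - 1)) % (L + 1) + 1) ≡ ((s + (j - 1)) + 1) [MOD L + 1] :=
            (Nat.mod_modEq _ _).add_right 1
          have hme' : ((s + (j - 1)) % (L + 1) + 1) % (L + 1) = ((s + (j - 1)) + 1) % (L + 1) := hme
          rw [hme', show s + (j - 1) + 1 = s + (j + 1 - 1) by omega]
        rw [← hstep]
        exact gcyc _ (hmod _)
  have := hmax _ this
  omega

lemma copy_star_of_le_degree {N : ℕ} {G : SimpleGraph (Fin N)} [DecidableRel G.Adj] {k : ℕ}
    {v : Fin N} (h : k ≤ G.degree v) : HasCopy (_root_.starGraph k) G := by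
  rw [SimpleGraph.degree] at h
  obtain ⟨t, hts, htc⟩ := Finset.exists_subset_card_eq h
  set e := t.orderIsoOfFin htc with hedef
  have hmem : ∀ j : Fin k, ((e j : Fin N) ∈ G.neighborFinset v) := fun j => hts (e j).2
  have hadj : ∀ j : Fin k, G.Adj v (e j) := fun j => by
    have := hmem j; rwa [mem_neighborFinset] at this
  refine ⟨fun a => if ha : a = 0 then v else (e (a.pred ha) : Fin N), ?_, ?_⟩
  · intro a b hab
    dsimp only at hab
    by_cases ha : a = 0 <;> by_cases hb : b = 0
    · rw [ha, hb]
    · rw [dif_pos ha, dif_neg hb] at hab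
      exact absurd hab (G.ne_of_adj (hadj _))
    · rw [dif_neg ha, dif_pos hb] at hab
      exact absurd hab.symm (G.ne_of_adj (hadj _))
    · rw [dif_neg ha, dif_neg hb] at hab
      have h1 : e (a.pred ha) = e (b.pred hb) := Subtype.ext hab
      have h2 := e.injective h1
      rwa [Fin.pred_inj] at h2
  · rintro a b ⟨hne, h0 | h0⟩
    all_goals dsimp only
    · subst h0
      have hb : b ≠ 0 := fun hb => hne (hb ▸ rfl)
      rw [dif_pos rfl, dif_neg hb]
      exact hadj _
    · subst h0
      have ha : a ≠ 0 := fun ha => hne (ha ▸ rfl)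
      rw [dif_neg ha, dif_pos rfl]
      exact (hadj _).symm

lemma le_degree_of_copy_star {N : ℕ} {G : SimpleGraph (Fin N)} [DecidableRel G.Adj] {k : ℕ}
    (h : HasCopy (_root_.starGraph k) G) : ∃ v, k ≤ G.degree v := by
  obtain ⟨f, finj, fadj⟩ := h
  refine ⟨f 0, ?_⟩
  have hmem : ∀ j : Fin k, f j.succ ∈ G.neighborFinset (f 0) := by
    intro j
    rw [mem_neighborFinset]
    exact (fadj j.succ 0 ⟨Fin.succ_ne_zero j, Or.inr rfl⟩).symm
  have : Function.Injective (fun j : Fin k => (⟨f j.succ, hmem j⟩ : {x // x ∈ G.neighborFinset (f 0)})) := by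
    intro a b hab
    have := finj (Subtype.ext_iff.mp hab)
    exact Fin.succ_injective _ this
  have hc := Fintype.card_le_of_injective _ this
  rwa [Fintype.card_fin, Fintype.card_coe] at hc

/-- decomposition from an edge coloring -/
def colorGraph {V : Type*} {k : ℕ} (χ : V → V → Fin k) (i : Fin k) : SimpleGraph V where
  Adj a b := a ≠ b ∧ χ a b = i ∧ χ b a = i
  symm := ⟨fun a b h => ⟨h.1.symm, h.2.2, h.2.1⟩⟩
  loopless := ⟨fun a h => h.1 rfl⟩

lemma colorGraph_decomp {V : Type*} {k : ℕ} (χ : V → V → Fin k)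
    (hs : ∀ a b, χ a b = χ b a) : IsDecompOfTop (colorGraph χ) := by
  intro a b hab
  refine ⟨χ a b, ⟨hab, rfl, (hs a b).symm⟩, ?_⟩
  intro i hi
  exact hi.2.1.symm

-- Lower bound 1 : m ≤ N
lemma lb_path (c : ℕ) (n : Fin c → ℕ) (m N : ℕ) (hpos : ∀ i, 1 ≤ n i)
    (hN : starPathRamseyProp c n m N) : m ≤ N := by
  by_contra hlt
  push_neg at hlt
  classical
  set χ : Fin N → Fin N → Fin (c + 1) := fun _ _ => Fin.last c with hχ
  rcases hN (colorGraph χ) (colorGraph_decomp χ (fun _ _ => rfl)) with ⟨i, f, finj, fadj⟩ | ⟨f, finj, -⟩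
  · have h1 : (_root_.starGraph (n i)).Adj 1 0 := by
      refine ⟨?_, Or.inr rfl⟩
      have h5 := hpos i
      intro he
      have := congrArg Fin.val he
      rw [Fin.val_one', Fin.val_zero, Nat.one_mod_eq_one.mpr (by omega)] at this
      omega
    have h2 := fadj 1 0 h1
    have h3 := h2.2.1
    have h4 : i.castSucc ≠ Fin.last c := Fin.ne_of_lt (Fin.castSucc_lt_last i)
    exact h4 h3.symm
  · have := Fintype.card_le_of_injective f finj
    simp only [Fintype.card_fin] at this
    omega

lemma mod_window_inj {s a b w : ℕ} (h : a % s = b % s) (ha1 : w ≤ a) (ha2 : a < w + s)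
    (hb1 : w ≤ b) (hb2 : b < w + s) : a = b := by
  rcases le_total a b with hab | hab
  · have hd := (Nat.modEq_iff_dvd' hab).mp h
    rcases Nat.eq_zero_or_pos (b - a) with h0 | h0
    · omega
    · have := Nat.le_of_dvd h0 hd
      omega
  · have hd := (Nat.modEq_iff_dvd' hab).mp h.symm
    rcases Nat.eq_zero_or_pos (a - b) with h0 | h0
    · omega
    · have := Nat.le_of_dvd h0 hd
      omega

-- Lower bound 2 : 2 * Sg + 1 ≤ N
lemma lb_star (c : ℕ) (n : Fin c → ℕ) (m N : ℕ) (hpos : ∀ i, 1 ≤ n i)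
    (hm : (∑ i, (n i - 1)) + 1 ≤ m)
    (hN : starPathRamseyProp c n m N) : 2 * (∑ i, (n i - 1)) + 1 ≤ N := by
  classical
  by_contra hlt
  push_neg at hlt
  set Sg := ∑ i, (n i - 1) with hSgdef
  have hNle : N ≤ 2 * Sg := by omega
  -- partial sums
  set S : ℕ → ℕ := fun i => ∑ j ∈ univ.filter (fun j : Fin c => (j : ℕ) < i), (n j - 1)
    with hSdef
  have hS0 : S 0 = 0 := by
    rw [hSdef]
    simp
  have hSc : S c = Sg := by
    rw [hSdef, hSgdef]
    dsimp only
    congr 1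
    exact Finset.filter_true_of_mem (fun j _ => j.isLt)
  have hSstep : ∀ i (hi : i < c), S (i + 1) = S i + (n ⟨i, hi⟩ - 1) := by
    intro i hi
    have hset : univ.filter (fun j : Fin c => (j : ℕ) < i + 1)
        = insert ⟨i, hi⟩ (univ.filter (fun j : Fin c => (j : ℕ) < i)) := by
      ext j
      simp only [Finset.mem_filter, Finset.mem_univ, true_and, Finset.mem_insert, Fin.ext_iff]
      omega
    rw [hSdef]
    dsimp only
    rw [hset, Finset.sum_insert (by simp)]
    exact Nat.add_comm _ _
  set idx : ℕ → ℕ := fun d => Nat.findGreatest (fun j => S j ≤ d) c with hidxdef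
  have hidx_le : ∀ d, S (idx d) ≤ d := by
    intro d
    exact Nat.findGreatest_spec (P := fun j => S j ≤ d) (Nat.zero_le c)
      (show S 0 ≤ d by rw [hS0]; omega)
  have hidx_lt : ∀ d, d < Sg → idx d < c := by
    intro d hd
    have h1 : idx d ≤ c := Nat.findGreatest_le (P := fun j => S j ≤ d) c
    rcases Nat.lt_or_ge (idx d) c with h2 | h2
    · exact h2
    · have h3 : idx d = c := by omega
      have := hidx_le d
      rw [h3, hSc] at this
      omega
  have hidx_gt : ∀ d, d < Sg → ∀ j : Fin c, idx d = (j : ℕ) → d < S j + (n j - 1) := by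
    intro d hd j hj
    by_contra hge
    push_neg at hge
    have hstep := hSstep j.val j.isLt
    rw [Fin.eta] at hstep
    have h1 : S ((j : ℕ) + 1) ≤ d := by omega
    have h2 := Nat.le_findGreatest (P := fun j => S j ≤ d) (by omega : (j : ℕ) + 1 ≤ c) h1
    have h2' : (j : ℕ) + 1 ≤ idx d := h2
    omega
  have hfiber : ∀ d, d < Sg → ∀ j : Fin c, idx d = (j : ℕ) →
      d ∈ Finset.Ico (S j) (S j + (n j - 1)) := by
    intro d hd j hj
    rw [Finset.mem_Ico]
    have h1 := hidx_le d
    rw [hj] at h1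
    exact ⟨h1, hidx_gt d hd j hj⟩
  -- the coloring
  set col : ℕ → ℕ → Fin (c + 1) := fun x y =>
    if h : x < Sg ∧ Sg ≤ y ∧ idx ((y - x) % Sg) < c
    then (⟨idx ((y - x) % Sg), h.2.2⟩ : Fin c).castSucc
    else Fin.last c with hcoldef
  set χ : Fin N → Fin N → Fin (c + 1) := fun a b => col (min a.val b.val) (max a.val b.val)
    with hχdef
  have hχsymm : ∀ a b, χ a b = χ b a := by
    intro a b
    rw [hχdef]
    dsimp only
    rw [min_comm, max_comm]
  have hcol_cast : ∀ (i : Fin c) (x y : ℕ), col x y = i.castSucc →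
      x < Sg ∧ Sg ≤ y ∧ idx ((y - x) % Sg) = (i : ℕ) := by
    intro i x y hxy
    rw [hcoldef] at hxy
    dsimp only at hxy
    split_ifs at hxy with hc
    · have := congrArg Fin.val hxy
      simp only [Fin.coe_castSucc] at this
      exact ⟨hc.1, hc.2.1, this⟩
    · exact absurd hxy.symm (Fin.ne_of_lt (Fin.castSucc_lt_last i))
  have hcol_last : ∀ x y : ℕ, col x y = Fin.last c → ¬(x < Sg ∧ Sg ≤ y) := by
    rintro x y hxy ⟨h1, h2⟩
    have hd : (y - x) % Sg < Sg := Nat.mod_lt _ (by omega)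
    have hc : x < Sg ∧ Sg ≤ y ∧ idx ((y - x) % Sg) < c := ⟨h1, h2, hidx_lt _ hd⟩
    rw [hcoldef] at hxy
    dsimp only at hxy
    rw [dif_pos hc] at hxy
    exact (Fin.ne_of_lt (Fin.castSucc_lt_last _)) hxy
  rcases hN (colorGraph χ) (colorGraph_decomp χ hχsymm) with ⟨i, hcopy⟩ | hcopy
  · -- star case
    obtain ⟨v, hdeg⟩ := le_degree_of_copy_star hcopy
    have hdegle : (colorGraph χ i.castSucc).degree v ≤ n i - 1 := by
      rw [SimpleGraph.degree]
      have hcard : (Finset.Ico (S i) (S i + (n i - 1))).card = n i - 1 := by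
        rw [Nat.card_Ico]
        omega
      rw [← hcard]
      refine Finset.card_le_card_of_injOn
        (fun u => (max v.val u.val - min v.val u.val) % Sg) ?_ ?_
      · intro u hu
        rw [Finset.mem_coe, mem_neighborFinset] at hu
        obtain ⟨hne, h1, h2⟩ := hu
        have h3 := hcol_cast i _ _ h1
        have hd : (max v.val u.val - min v.val u.val) % Sg < Sg := Nat.mod_lt _ (by omega)
        exact hfiber _ hd i h3.2.2
      · intro u hu u' hu' heq
        dsimp only at heq
        rw [Finset.mem_coe, mem_neighborFinset] at hu hu'
        obtain ⟨hne, h1, -⟩ := hu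
        obtain ⟨hne', h1', -⟩ := hu'
        have h3 := hcol_cast i _ _ h1
        have h3' := hcol_cast i _ _ h1'
        have hSg0 : 0 < Sg := by omega
        have huN := u.isLt
        have huN' := u'.isLt
        have hvN := v.isLt
        by_cases hv : v.val < Sg
        · -- u, u' are on the big side
          have hu2 : Sg ≤ u.val := by
            rcases le_total v.val u.val with hle | hle
            · have := h3.2.1
              rwa [max_eq_right hle] at this
            · have := h3.2.1
              rw [max_eq_left hle] at this
              omega
          have hu2' : Sg ≤ u'.val := by
            rcases le_total v.val u'.val with hle | hle
            · have := h3'.2.1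
              rwa [max_eq_right hle] at this
            · have := h3'.2.1
              rw [max_eq_left hle] at this
              omega
          have hvu : v.val ≤ u.val := by omega
          have hvu' : v.val ≤ u'.val := by omega
          rw [max_eq_right hvu, min_eq_left hvu, max_eq_right hvu', min_eq_left hvu'] at heq
          have := mod_window_inj (w := Sg - v.val) heq (by omega) (by omega) (by omega) (by omega)
          exact Fin.ext (by omega)
        · -- u, u' are on the small side
          push_neg at hv
          have hu2 : u.val < Sg := by
            rcases le_total u.val v.val with hle | hle
            · have := h3.1
              rw [min_eq_right hle] at this
              omega
            · have := h3.1
              rw [min_eq_left hle] at this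
              omega
          have hu2' : u'.val < Sg := by
            rcases le_total u'.val v.val with hle | hle
            · have := h3'.1
              rw [min_eq_right hle] at this
              omega
            · have := h3'.1
              rw [min_eq_left hle] at this
              omega
          have hvu : u.val ≤ v.val := by omega
          have hvu' : u'.val ≤ v.val := by omega
          rw [max_eq_left hvu, min_eq_right hvu, max_eq_left hvu', min_eq_right hvu'] at heq
          have := mod_window_inj (w := v.val - Sg + 1) heq (by omega) (by omega) (by omega) (by omega)
          exact Fin.ext (by omega)
    have := hpos i
    omega
  · -- path case
    obtain ⟨f, finj, fadj⟩ := hcopy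
    have hm0 : 0 < m := by omega
    have hN0 : 0 < N := by
      have := (f ⟨0, hm0⟩).isLt
      omega
    have hSg0 : 0 < Sg := by omega
    have hsides : ∀ a b : Fin N, χ a b = Fin.last c → (a.val < Sg ↔ b.val < Sg) := by
      intro a b hab
      rw [hχdef] at hab
      dsimp only at hab
      have hnc := hcol_last _ _ hab
      constructor
      · intro h1
        by_contra h2
        push_neg at h2
        exact hnc ⟨lt_of_le_of_lt (min_le_left _ _) h1, le_trans h2 (le_max_right _ _)⟩
      · intro h1
        by_contra h2
        push_neg at h2
        exact hnc ⟨lt_of_le_of_lt (min_le_right _ _) h1, le_trans h2 (le_max_left _ _)⟩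
    have hsame : ∀ k (hk : k < m), ((f ⟨k, hk⟩).val < Sg ↔ (f ⟨0, hm0⟩).val < Sg) := by
      intro k
      induction k with
      | zero => intro hk; exact Iff.rfl
      | succ k ih =>
        intro hk
        have hk' : k < m := by omega
        have hadj : (SimpleGraph.pathGraph m).Adj ⟨k, hk'⟩ ⟨k + 1, hk⟩ := by
          rw [SimpleGraph.pathGraph_adj]
          exact Or.inl rfl
        obtain ⟨hne, h1, -⟩ := fadj _ _ hadj
        exact ((hsides _ _ h1).symm.trans (ih hk'))
    by_cases h0 : (f ⟨0, hm0⟩).val < Sg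
    · have hF : Function.Injective (fun k : Fin m =>
          (⟨(f k).val, (hsame k.val k.isLt).mpr h0⟩ : Fin Sg)) := by
        intro a b hab
        have h' := congrArg Fin.val hab
        dsimp only at h'
        exact finj (Fin.ext h')
      have := Fintype.card_le_of_injective _ hF
      simp only [Fintype.card_fin] at this
      omega
    · have hbig : ∀ k : Fin m, Sg ≤ (f k).val := by
        intro k
        have h1 := (hsame k.val k.isLt)
        rw [Fin.eta] at h1
        exact le_of_not_gt (fun hk2 => h0 (h1.mp hk2))
      have hF : Function.Injective (fun k : Fin m =>
          (⟨(f k).val - Sg, by have h1 := hbig k; have h2 := (f k).isLt; omega⟩ : Fin Sg)) := by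
        intro a b hab
        have h1 := congrArg Fin.val hab
        dsimp only at h1
        have h2 := hbig a
        have h3 := hbig b
        exact finj (Fin.ext (by omega))
      have := Fintype.card_le_of_injective _ hF
      simp only [Fintype.card_fin] at this
      omega

lemma hasCopy_pathGraph {N m : ℕ} {G : SimpleGraph (Fin N)} (hm : m ≤ N)
    (hp : GoodPath G (N - 1)) : HasCopy (SimpleGraph.pathGraph m) G := by
  obtain ⟨f, finj, fadj⟩ := hp
  refine ⟨fun k => f k.val, ?_, ?_⟩
  · intro a b hab
    exact Fin.ext (finj a.val b.val (by omega) (by omega) hab)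
  · intro a b hab
    rw [SimpleGraph.pathGraph_adj] at hab
    rcases hab with hab | hab
    · have h1 := fadj a.val (by omega)
      rwa [hab] at h1
    · have h1 := fadj b.val (by omega)
      rw [hab] at h1
      exact h1.symm

theorem upper_bound (c : ℕ) (n : Fin c → ℕ) (m N : ℕ) (hpos : ∀ i, 1 ≤ n i) (hm : 1 ≤ m)
    (hmN : m ≤ N) (hSN : 2 * (∑ i, (n i - 1)) + 1 ≤ N) :
    starPathRamseyProp c n m N := by
  classical
  intro Gs hdec
  set Sg := ∑ i, (n i - 1) with hSgdef
  by_cases hstar : ∃ i : Fin c, HasCopy (_root_.starGraph (n i)) (Gs i.castSucc)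
  · exact Or.inl hstar
  right
  push_neg at hstar
  have degb : ∀ (i : Fin c) (v : Fin N), (Gs i.castSucc).degree v ≤ n i - 1 := by
    intro i v
    by_contra hlt
    push_neg at hlt
    exact hstar i (copy_star_of_le_degree (v := v) (by have := hpos i; omega))
  have hSN' : 2 * Sg + 1 ≤ N := hSN
  have degc : ∀ v : Fin N, N - 1 - Sg ≤ (Gs (Fin.last c)).degree v := by
    intro v
    have cover : (univ.erase v) ⊆
        (univ : Finset (Fin c)).biUnion (fun i => (Gs i.castSucc).neighborFinset v) ∪
          (Gs (Fin.last c)).neighborFinset v := by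
      intro u hu
      rw [Finset.mem_erase] at hu
      obtain ⟨j, hj, -⟩ := hdec v u (fun he => hu.1 he.symm)
      rw [Finset.mem_union]
      by_cases hjl : j = Fin.last c
      · right
        rw [mem_neighborFinset]
        rwa [hjl] at hj
      · left
        obtain ⟨j', rfl⟩ := Fin.exists_castSucc_eq.mpr hjl
        rw [Finset.mem_biUnion]
        exact ⟨j', Finset.mem_univ _, by rwa [mem_neighborFinset]⟩
    have h1 := Finset.card_le_card cover
    have h2 : (univ.erase v).card = N - 1 := by
      rw [Finset.card_erase_of_mem (Finset.mem_univ _)]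
      simp
    have h3 := Finset.card_union_le
      ((univ : Finset (Fin c)).biUnion (fun i => (Gs i.castSucc).neighborFinset v))
      ((Gs (Fin.last c)).neighborFinset v)
    have h4 := Finset.card_biUnion_le
      (s := (univ : Finset (Fin c))) (t := fun i => (Gs i.castSucc).neighborFinset v)
    have h5 : ∑ i : Fin c, ((Gs i.castSucc).neighborFinset v).card ≤ Sg := by
      rw [hSgdef]
      exact Finset.sum_le_sum (fun i _ => degb i v)
    have h6 : ((Gs (Fin.last c)).neighborFinset v).card = (Gs (Fin.last c)).degree v := rfl
    omega
  have hN0 : 0 < N := by omega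
  have hpath := exists_long_path (Gs (Fin.last c)) hN0 degc (by omega)
  exact hasCopy_pathGraph hmN hpath

theorem stmt8 (c : ℕ) (n : Fin c → ℕ) (m : ℕ) (hpos : ∀ i, 1 ≤ n i) (hm : 1 ≤ m)
    (h : (∑ i, (n i - 1)) + 1 ≤ m) :
    IsLeast {N | starPathRamseyProp c n m N} (max m (2 * (∑ i, (n i - 1)) + 1)) := by
  constructor
  · exact upper_bound c n m _ hpos hm (le_max_left _ _) (le_max_right _ _)
  · intro N hN
    exact max_le (lb_path c n m N hpos hN) (lb_star c n m N hpos h hN)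
end

section
/- Let Σ = t(m−2) for positive integers t and m ≥ 3, with Σ + m even. Then the disjoint union of t+1 copies of K_{m−2} together with its complement (the complete (t+1)-partite graph with all parts of size m−2 on Σ + m − 2 vertices) gives a 2-decomposition of K_{Σ+m−2} in which one part contains no path on m vertices and the other part has chromatic index equal to Σ. -/
open SimpleGraph Finset

/-- The disjoint union of `p` copies of the complete graph `K_q`. -/
def cliqueUnion (p q : ℕ) : SimpleGraph (Fin p × Fin q) where
  Adj a b := a.1 = b.1 ∧ a ≠ b
  symm := ⟨fun a b h => ⟨h.1.symm, h.2.symm⟩⟩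
  loopless := ⟨fun a h => h.2 rfl⟩

section MyAux

lemma castInjAux {M x y : ℕ} (hx : x < M) (hy : y < M) (h : (x : ZMod M) = y) : x = y := by
  haveI : NeZero M := ⟨by omega⟩
  have h2 := congrArg ZMod.val h
  rwa [ZMod.val_cast_of_lt hx, ZMod.val_cast_of_lt hy] at h2

/-- Round-robin edge coloring of `K_N` (`N` even) with `N-1` colors. -/
def gcol (N : ℕ) (a b : Fin N) : ZMod (N - 1) :=
  if a.val = N - 1 then (b.val : ZMod (N-1))
  else if b.val = N - 1 then (a.val : ZMod (N-1))
  else ((a.val : ZMod (N-1)) + (b.val : ZMod (N-1))) * (N / 2 : ℕ)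

lemma gcol_symm (N : ℕ) (a b : Fin N) : gcol N a b = gcol N b a := by
  unfold gcol; split_ifs with h1 h2 h3 <;> first | rfl | (rw [h1, h2]) | ring

lemma gcol_two (N : ℕ) (hN : 2 ≤ N) (hNe : Even N) :
    ((N / 2 : ℕ) : ZMod (N - 1)) * 2 = 1 := by
  have hd : N / 2 * 2 = N := Nat.div_mul_cancel hNe.two_dvd
  have key : ((N/2 * 2 : ℕ) : ZMod (N-1)) = 1 := by
    rw [hd, show N = (N-1)+1 by omega]
    push_cast [ZMod.natCast_self]
    ring
  rw [Nat.cast_mul] at key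
  push_cast at key
  exact key

lemma gcol_inj (N : ℕ) (hN : 2 ≤ N) (hNe : Even N) (a b b' : Fin N)
    (hb : b ≠ a) (hb' : b' ≠ a) (h : gcol N a b = gcol N a b') : b = b' := by
  have htwo := gcol_two N hN hNe
  have hav := a.isLt; have hbv := b.isLt; have hb'v := b'.isLt
  have hbne : b.val ≠ a.val := fun hh => hb (Fin.ext hh)
  have hb'ne : b'.val ≠ a.val := fun hh => hb' (Fin.ext hh)
  unfold gcol at h
  split_ifs at h with hc1 hc2 hc3 hc4 hc5
  · -- a = ∞
    exact Fin.ext (castInjAux (by omega) (by omega) h)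
  · -- b = ∞, b' = ∞
    exact Fin.ext (by omega)
  · -- b = ∞, b' finite : h : ↑a = (↑a+↑b')*u
    exfalso
    have : ((a.val : ZMod (N-1))) = (b'.val : ZMod (N-1)) := by
      linear_combination 2*h + ((a.val : ZMod (N-1)) + (b'.val : ZMod (N-1))) * htwo
    have := castInjAux (x := a.val) (y := b'.val) (by omega) (by omega) this
    omega
  · -- b finite, b' = ∞ : h : (↑a+↑b)*u = ↑a
    exfalso
    have : ((a.val : ZMod (N-1))) = (b.val : ZMod (N-1)) := by
      linear_combination (-2)*h + ((a.val : ZMod (N-1)) + (b.val : ZMod (N-1))) * htwo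
    have := castInjAux (x := a.val) (y := b.val) (by omega) (by omega) this
    omega
  · -- both finite
    have : ((b.val : ZMod (N-1))) = (b'.val : ZMod (N-1)) := by
      linear_combination 2*h + ((b'.val : ZMod (N-1)) - (b.val : ZMod (N-1))) * htwo
    exact Fin.ext (castInjAux (by omega) (by omega) this)

lemma proper_of_local {V : Type*} (G : SimpleGraph V) (k : ℕ) (F : Sym2 V → Fin k)
    (h : ∀ v w w', G.Adj v w → G.Adj v w' → w ≠ w' → F s(v, w) ≠ F s(v, w')) :
    HasProperEdgeColoring G k := by
  refine ⟨F, ?_⟩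
  intro e₁ h₁ e₂ h₂ hne hsh
  obtain ⟨v, hv1, hv2⟩ := hsh
  have key : ∀ e, e ∈ G.edgeSet → v ∈ e → ∃ w, e = s(v, w) ∧ G.Adj v w := by
    intro e
    induction e using Sym2.ind with
    | _ x y =>
      intro he hv
      rw [SimpleGraph.mem_edgeSet] at he
      rcases Sym2.mem_iff.mp hv with rfl | rfl
      · exact ⟨y, rfl, he⟩
      · exact ⟨x, Sym2.eq_swap, he.symm⟩
  obtain ⟨w₁, he₁, ha₁⟩ := key e₁ h₁ hv1
  obtain ⟨w₂, he₂, ha₂⟩ := key e₂ h₂ hv2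
  subst he₁; subst he₂
  exact h v w₁ w₂ ha₁ ha₂ (fun hw => hne (by rw [hw]))

lemma blowup (n r d q s k₀ : ℕ) (hd : 0 < d) (hq : 0 < q) (hrdq : r = d * q)
    (φ : Fin n → Fin d → Fin s) (C : Fin s → Fin s → Fin k₀)
    (hCs : ∀ x y, C x y = C y x)
    (hφ : ∀ a ε a' ε', φ a ε = φ a' ε' → a = a' ∧ ε = ε')
    (h2 : ∀ a ε b ε₁ b' ε₂, a ≠ b → a ≠ b' →
      C (φ a ε) (φ b ε₁) = C (φ a ε) (φ b' ε₂) → φ b ε₁ = φ b' ε₂) :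
    HasProperEdgeColoring (completeMultipartiteEq n r) (k₀ * q) := by
  have hbound : ∀ (c : Fin k₀) (z : ℕ), z < q → c.val * q + z < k₀ * q := by
    intro c z hz
    have hc := c.isLt
    calc c.val * q + z < (c.val + 1) * q := by rw [Nat.succ_mul]; omega
    _ ≤ k₀ * q := Nat.mul_le_mul_right q hc
  have md : ∀ i : Fin r, i.val % d < d := fun i => Nat.mod_lt _ hd
  set col : (Fin n × Fin r) → (Fin n × Fin r) → Fin (k₀ * q) := fun x y =>
    ⟨(C (φ x.1 ⟨x.2.val % d, md x.2⟩) (φ y.1 ⟨y.2.val % d, md y.2⟩)).val * q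
      + (x.2.val / d + y.2.val / d) % q,
      hbound _ _ (Nat.mod_lt _ hq)⟩ with hcol
  have hcs : ∀ x y, col x y = col y x := by
    intro x y
    apply Fin.ext
    simp only [hcol]
    rw [hCs, Nat.add_comm (x.2.val / d)]
  apply proper_of_local _ _ (Sym2.lift ⟨col, hcs⟩)
  rintro ⟨a, i⟩ ⟨b, j⟩ ⟨b', j'⟩ hvw hvw' hne heq
  rw [Sym2.lift_mk, Sym2.lift_mk] at heq
  have hab : a ≠ b := hvw
  have hab' : a ≠ b' := hvw'
  have heq2 : col (a, i) (b, j) = col (a, i) (b', j') := heq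
  have hval := congrArg Fin.val heq2
  simp only [hcol] at hval
  set c₁ := C (φ a ⟨i.val % d, md i⟩) (φ b ⟨j.val % d, md j⟩) with hc₁
  set c₂ := C (φ a ⟨i.val % d, md i⟩) (φ b' ⟨j'.val % d, md j'⟩) with hc₂
  have hz1 : (i.val / d + j.val / d) % q < q := Nat.mod_lt _ hq
  have hz2 : (i.val / d + j'.val / d) % q < q := Nat.mod_lt _ hq
  have d1 : (c₁.val * q + (i.val / d + j.val / d) % q) / q = c₁.val := by
    rw [Nat.mul_comm, Nat.mul_add_div hq, Nat.div_eq_of_lt hz1, Nat.add_zero]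
  have d2 : (c₂.val * q + (i.val / d + j'.val / d) % q) / q = c₂.val := by
    rw [Nat.mul_comm, Nat.mul_add_div hq, Nat.div_eq_of_lt hz2, Nat.add_zero]
  have hcc : c₁.val = c₂.val := by rw [← d1, ← d2, hval]
  have hCeq : c₁ = c₂ := Fin.ext hcc
  have hphi := h2 a _ b _ b' _ hab hab' hCeq
  obtain ⟨hbb', hee⟩ := hφ _ _ _ _ hphi
  have hmod : j.val % d = j'.val % d := by simpa using hee
  have hzz : (i.val / d + j.val / d) % q = (i.val / d + j'.val / d) % q := by
    rw [hcc] at hval; omega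
  have hjq : j.val / d < q := (Nat.div_lt_iff_lt_mul hd).mpr
    (by rw [Nat.mul_comm]; exact hrdq ▸ j.isLt)
  have hj'q : j'.val / d < q := (Nat.div_lt_iff_lt_mul hd).mpr
    (by rw [Nat.mul_comm]; exact hrdq ▸ j'.isLt)
  have hdiv : j.val / d = j'.val / d := by
    have hmq := Nat.ModEq.add_left_cancel' (i.val / d) hzz
    rwa [Nat.ModEq, Nat.mod_eq_of_lt hjq, Nat.mod_eq_of_lt hj'q] at hmq
  have hjj : j = j' := by
    apply Fin.ext
    have e1 := Nat.div_add_mod j.val d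
    have e2 := Nat.div_add_mod j'.val d
    rw [hdiv, hmod] at e1
    omega
  exact hne (Prod.ext hbb' hjj)

end MyAux
section MyAux2

lemma upperA (t r : ℕ) (ht : 0 < t) (hr : 0 < r) (hev : Even (t+1)) :
    HasProperEdgeColoring (completeMultipartiteEq (t+1) r) (t * r) := by
  haveI : NeZero (t+1-1) := ⟨by omega⟩
  have hval : ∀ a b : Fin (t+1), (gcol (t+1) a b).val < t := fun a b => ZMod.val_lt _
  refine blowup (t+1) r 1 r (t+1) t one_pos hr (one_mul r).symm (fun a _ => a)
    (fun x y => ⟨(gcol (t+1) x y).val, hval x y⟩) ?_ ?_ ?_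
  · intro x y; apply Fin.ext; simp only; rw [gcol_symm]
  · intro a ε a' ε' h; exact ⟨h, Subsingleton.elim _ _⟩
  · intro a ε b ε₁ b' ε₂ hab hab' h
    have hv : (gcol (t+1) a b).val = (gcol (t+1) a b').val := congrArg Fin.val h
    have hg : gcol (t+1) a b = gcol (t+1) a b' := ZMod.val_injective _ hv
    exact gcol_inj (t+1) (by omega) hev a b b' (fun hh => hab hh.symm)
      (fun hh => hab' hh.symm) hg

/-- vertex embedding of `K_{n×2}` into the cocktail-party structure on `2n` points -/
def phiB (t : ℕ) (a : Fin (t+1)) (ε : Fin 2) : Fin (2*(t+1)) :=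
  if a.val = 0 then
    (if ε.val = 0 then ⟨0, by omega⟩ else ⟨2*(t+1)-1, by omega⟩)
  else
    (if ε.val = 0 then ⟨a.val, by have := a.isLt; omega⟩ else ⟨2*(t+1)-1-a.val, by omega⟩)

lemma phiB_val (t : ℕ) (a : Fin (t+1)) (ε : Fin 2) : (phiB t a ε).val =
    if a.val = 0 then (if ε.val = 0 then 0 else 2*(t+1)-1)
    else (if ε.val = 0 then a.val else 2*(t+1)-1-a.val) := by
  unfold phiB; split_ifs <;> rfl

lemma phiB_inj (t : ℕ) (a : Fin (t+1)) (ε : Fin 2) (a' : Fin (t+1)) (ε' : Fin 2)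
    (h : phiB t a ε = phiB t a' ε') : a = a' ∧ ε = ε' := by
  have hv := congrArg Fin.val h
  rw [phiB_val, phiB_val] at hv
  have h1 := a.isLt; have h2 := a'.isLt; have h3 := ε.isLt; have h4 := ε'.isLt
  constructor <;> apply Fin.ext <;> (split_ifs at hv <;> omega)

lemma gphi_ne (t : ℕ) (ht : 0 < t) (a b : Fin (t+1)) (ε ε' : Fin 2) (hab : a ≠ b) :
    gcol (2*(t+1)) (phiB t a ε) (phiB t b ε') ≠ 0 := by
  haveI : NeZero (2*(t+1) - 1) := ⟨by omega⟩
  have hva := phiB_val t a ε; have hvb := phiB_val t b ε'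
  have h1 := a.isLt; have h2 := b.isLt; have h3 := ε.isLt; have h4 := ε'.isLt
  have habv : a.val ≠ b.val := fun hh => hab (Fin.ext hh)
  intro h0
  unfold gcol at h0
  split_ifs at h0 with hc1 hc2
  · -- (phiB t a ε).val = 2*(t+1)-1, so a = 0 and b ≠ 0
    have ha0 : a.val = 0 := by rw [hva] at hc1; split_ifs at hc1 <;> omega
    have hd : (2*(t+1)-1) ∣ (phiB t b ε').val :=
      (ZMod.natCast_eq_zero_iff _ _).mp h0
    have hbv : 0 < (phiB t b ε').val ∧ (phiB t b ε').val < 2*(t+1)-1 := by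
      rw [hvb]; split_ifs <;> omega
    have := Nat.le_of_dvd hbv.1 hd; omega
  · -- (phiB t b ε').val = 2*(t+1)-1, so b = 0 and a ≠ 0
    have hb0 : b.val = 0 := by rw [hvb] at hc2; split_ifs at hc2 <;> omega
    have hd : (2*(t+1)-1) ∣ (phiB t a ε).val :=
      (ZMod.natCast_eq_zero_iff _ _).mp h0
    have hav : 0 < (phiB t a ε).val ∧ (phiB t a ε).val < 2*(t+1)-1 := by
      rw [hva]; split_ifs <;> omega
    have := Nat.le_of_dvd hav.1 hd; omega
  · -- both finite
    have htwo := gcol_two (2*(t+1)) (by omega) (even_two_mul _)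
    have hsum : ((((phiB t a ε).val + (phiB t b ε').val : ℕ)) : ZMod (2*(t+1)-1)) = 0 := by
      push_cast
      linear_combination 2*h0 - (((phiB t a ε).val : ZMod (2*(t+1)-1))
        + ((phiB t b ε').val : ZMod (2*(t+1)-1))) * htwo
    have hd := (ZMod.natCast_eq_zero_iff _ _).mp hsum
    obtain ⟨c, hc⟩ := hd
    have hu := (phiB t a ε).isLt; have hw := (phiB t b ε').isLt
    have hc01 : c = 0 ∨ c = 1 := by
      rcases c with _ | _ | c
      · left; rfl
      · right; rfl
      · exfalso
        have hgrow : (2*(t+1)-1) * (c+1+1) = (2*(t+1)-1)*c + (2*(t+1)-1)*2 := by ring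
        rw [hgrow] at hc
        have hnn : 0 ≤ (2*(t+1)-1)*c := Nat.zero_le _
        generalize (2*(t+1)-1)*c = x at hc hnn
        omega
    rcases hc01 with rfl | rfl
    · rw [Nat.mul_zero] at hc
      rw [hva, hvb] at hc
      split_ifs at hc <;> omega
    · rw [Nat.mul_one] at hc
      rw [hva, hvb] at hc
      split_ifs at hc <;> omega

lemma upperB (t r : ℕ) (ht : 0 < t) (hr : 0 < r) (hodd : ¬ Even (t+1)) (hre : r % 2 = 0) :
    HasProperEdgeColoring (completeMultipartiteEq (t+1) r) (t * r) := by
  haveI : NeZero (2*(t+1)-1) := ⟨by omega⟩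
  have hvlt : ∀ u w : Fin (2*(t+1)), (gcol (2*(t+1)) u w).val < 2*(t+1)-1 :=
    fun u w => ZMod.val_lt _
  have hC : ∀ u w : Fin (2*(t+1)), (gcol (2*(t+1)) u w).val - 1 < 2*t := by
    intro u w; have := hvlt u w; omega
  have hcol := blowup (t+1) r 2 (r/2) (2*(t+1)) (2*t) (by omega) (by omega) (by omega)
    (phiB t) (fun u w => ⟨(gcol (2*(t+1)) u w).val - 1, hC u w⟩) ?_ (phiB_inj t) ?_
  · have harith : 2*t*(r/2) = t * r := by
      have h2r : r/2*2 = r := Nat.div_mul_cancel (by omega)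
      calc 2*t*(r/2) = t*(r/2*2) := by ring
      _ = t*r := by rw [h2r]
    rwa [harith] at hcol
  · intro x y; apply Fin.ext; simp only; rw [gcol_symm]
  · intro a ε b ε₁ b' ε₂ hab hab' h
    have hnz := gphi_ne t ht a b ε ε₁ hab
    have hnz' := gphi_ne t ht a b' ε ε₂ hab'
    have hz : (gcol (2*(t+1)) (phiB t a ε) (phiB t b ε₁)).val ≠ 0 :=
      fun hh => hnz ((ZMod.val_eq_zero _).mp hh)
    have hz' : (gcol (2*(t+1)) (phiB t a ε) (phiB t b' ε₂)).val ≠ 0 :=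
      fun hh => hnz' ((ZMod.val_eq_zero _).mp hh)
    have hv : (gcol (2*(t+1)) (phiB t a ε) (phiB t b ε₁)).val - 1
        = (gcol (2*(t+1)) (phiB t a ε) (phiB t b' ε₂)).val - 1 := congrArg Fin.val h
    have hveq : (gcol (2*(t+1)) (phiB t a ε) (phiB t b ε₁)).val
        = (gcol (2*(t+1)) (phiB t a ε) (phiB t b' ε₂)).val := by omega
    have hg := ZMod.val_injective _ hveq
    refine gcol_inj (2*(t+1)) (by omega) (even_two_mul _) _ _ _ ?_ ?_ hg
    · intro hh; exact hab ((phiB_inj t _ _ _ _ hh).1.symm)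
    · intro hh; exact hab' ((phiB_inj t _ _ _ _ hh).1.symm)

lemma upperAll (t r : ℕ) (ht : 0 < t) (hr : 0 < r) (hpar : Even ((t+1)*r)) :
    HasProperEdgeColoring (completeMultipartiteEq (t+1) r) (t * r) := by
  by_cases he : Even (t+1)
  · exact upperA t r ht hr he
  · have h1 : (t+1) % 2 = 1 := Nat.odd_iff.mp (Nat.not_even_iff_odd.mp he)
    have hmm := Nat.mul_mod (t+1) r 2
    rw [h1, one_mul] at hmm
    rw [Nat.even_iff] at hpar
    have hre : r % 2 = 0 := by omega
    exact upperB t r ht hr he hre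

end MyAux2
section MyAux3

lemma lowerBound (t r k : ℕ) (hr : 0 < r)
    (h : HasProperEdgeColoring (completeMultipartiteEq (t+1) r) k) : t * r ≤ k := by
  obtain ⟨f, hf⟩ := h
  set v : Fin (t+1) × Fin r := (0, ⟨0, hr⟩) with hv
  set ι : Fin t × Fin r → Fin k := fun p => f s(v, (p.1.succ, p.2)) with hι
  have hadj : ∀ p : Fin t × Fin r,
      (completeMultipartiteEq (t+1) r).Adj v (p.1.succ, p.2) :=
    fun p => (Fin.succ_ne_zero p.1).symm
  have hinj : Function.Injective ι := by
    intro p p' hpp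
    by_contra hne
    have hww : ((p.1.succ, p.2) : Fin (t+1) × Fin r) ≠ (p'.1.succ, p'.2) := by
      intro hh
      apply hne
      have h1 := congrArg Prod.fst hh
      have h2 := congrArg Prod.snd hh
      exact Prod.ext (Fin.succ_injective _ h1) h2
    have hse : s(v, ((p.1.succ, p.2) : Fin (t+1) × Fin r))
        ≠ s(v, (p'.1.succ, p'.2)) := by
      intro hh
      rcases Sym2.eq_iff.mp hh with ⟨-, h2⟩ | ⟨h1, -⟩
      · exact hww h2
      · exact (Fin.succ_ne_zero p'.1) (congrArg Prod.fst h1.symm)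
    exact hf _ ((SimpleGraph.mem_edgeSet _).mpr (hadj p)) _
      ((SimpleGraph.mem_edgeSet _).mpr (hadj p')) hse
      ⟨v, Sym2.mem_mk_left _ _, Sym2.mem_mk_left _ _⟩ hpp
  have hcard := Fintype.card_le_of_injective ι hinj
  simpa using hcard

lemma multipartiteChromIndex (t r : ℕ) (ht : 0 < t) (hr : 0 < r)
    (hpar : Even ((t+1)*r)) :
    chromIndex (completeMultipartiteEq (t+1) r) = t * r := by
  have hub := upperAll t r ht hr hpar
  apply le_antisymm
  · exact Nat.sInf_le hub
  · exact le_csInf ⟨_, hub⟩ (fun k hk => lowerBound t r k hr hk)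

lemma complEq (p q : ℕ) : (cliqueUnion p q)ᶜ = completeMultipartiteEq p q := by
  ext a b
  rw [SimpleGraph.compl_adj]
  have hcu : (cliqueUnion p q).Adj a b ↔ (a.1 = b.1 ∧ a ≠ b) := Iff.rfl
  have hcm : (completeMultipartiteEq p q).Adj a b ↔ a.1 ≠ b.1 := Iff.rfl
  rw [hcu, hcm]
  constructor
  · rintro ⟨hne, hn⟩ h1
    exact hn ⟨h1, hne⟩
  · intro h1
    exact ⟨fun hh => h1 (by rw [hh]), fun hh => h1 hh.1⟩

lemma noPath (t m : ℕ) (hm : 3 ≤ m) :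
    ¬ HasCopy (SimpleGraph.pathGraph m) (cliqueUnion (t + 1) (m - 2)) := by
  rintro ⟨f, hinj, hhom⟩
  have h0 : 0 < m := by omega
  have hfst : ∀ k (hk : k < m), (f ⟨k, hk⟩).1 = (f ⟨0, h0⟩).1 := by
    intro k
    induction k with
    | zero => intro hk; rfl
    | succ n ih =>
      intro hk
      have hn : n < m := by omega
      have hadj : (SimpleGraph.pathGraph m).Adj ⟨n, hn⟩ ⟨n+1, hk⟩ := by
        rw [SimpleGraph.pathGraph_adj]; left; rfl
      have := (hhom _ _ hadj).1
      rw [← this]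
      exact ih hn
  set g : Fin m → Fin (m - 2) := fun i => (f i).2 with hg
  have hginj : Function.Injective g := by
    intro i i' hii
    apply hinj
    apply Prod.ext
    · have e1 := hfst i.val i.isLt
      have e2 := hfst i'.val i'.isLt
      simp only [Fin.eta] at e1 e2
      rw [e1, e2]
    · exact hii
  have hcard := Fintype.card_le_of_injective g hginj
  simp only [Fintype.card_fin] at hcard
  omega

end MyAux3
theorem stmt18 (t m : ℕ) (ht : 0 < t) (hm : 3 ≤ m) (heven : Even (t * (m - 2) + m)) :
    (cliqueUnion (t + 1) (m - 2))ᶜ = completeMultipartiteEq (t + 1) (m - 2) ∧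
    cliqueUnion (t + 1) (m - 2) ⊔ (cliqueUnion (t + 1) (m - 2))ᶜ = ⊤ ∧
    ¬ HasCopy (SimpleGraph.pathGraph m) (cliqueUnion (t + 1) (m - 2)) ∧
    chromIndex (cliqueUnion (t + 1) (m - 2))ᶜ = t * (m - 2) := by
  have hc := complEq (t+1) (m-2)
  refine ⟨hc, ?_, noPath t m hm, ?_⟩
  · ext a b
    rw [SimpleGraph.sup_adj, SimpleGraph.compl_adj, SimpleGraph.top_adj]
    constructor
    · rintro (h | h)
      · exact h.2
      · exact h.1
    · intro h
      by_cases hA : (cliqueUnion (t+1) (m-2)).Adj a b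
      · exact Or.inl hA
      · exact Or.inr ⟨h, hA⟩
  · rw [hc]
    have hr : 0 < m - 2 := by omega
    have hpar : Even ((t+1)*(m-2)) := by
      have hrw : (t+1)*(m-2) = t*(m-2) + (m-2) := by ring
      rw [hrw, Nat.even_iff]
      rw [Nat.even_iff] at heven
      omega
    exact multipartiteChromIndex t (m-2) ht hr hpar
end
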